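/- arXiv:2007.02055 — 8 statements merged into one kernel-verified Lean document; each statement's English description precedes it below -/
import Mathlib

section
/- Let λ : ℕ → ℂ satisfy λ(0) = 1 and the Hecke relation λ(α+β) = λ(α)·λ(β) − λ(α−1)·λ(β−1) for all integers α, β ≥ 1. Assume there are constants C ≥ 0 and R ≥ 1 such that |λ(n)| ≤ C·R^n for all n ∈ ℕ, and let x ∈ ℂ with |x| < R^(−2) (so all series below converge absolutely). Then for every integer b ≥ 1 one has (1 + x) · ∑_{j=0}^{∞} λ(b+2j)·x^j = (λ(b) − x·λ*(b−2)) · ∑_{j=0}^{∞} λ(2j)·x^j, where λ*(b−2) := λ(b−2) for b ≥ 2 and λ*(−1) := 0; in particular for b = 1 the identity reads (1+x)·∑_{j≥0} λ(1+2j)·x^j = λ(1)·∑_{j≥0} λ(2j)·x^j. -/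
/-!
Applying the Hecke relation to `(b, 2k + 2)` and to `(b - 1, 2k + 1)` and adding, the terms
`λ(b - 1) λ(2k + 1)` cancel and leave
`λ(b + 2k + 2) + λ(b + 2k) = λ(b) λ(2k + 2) - λ(b - 2) λ(2k)`
(for `b = 1` the first relation alone does it, as `λ(0) = 1`). These are the coefficients of
`x^(k+1)` in `(1 + x) ∑ λ(b + 2j) x^j` and in `(λ(b) - x λ(b - 2)) ∑ λ(2j) x^j`, and the constant
terms agree because `λ(0) = 1`. The growth bound dominates both series by a geometric series of
ratio `R² ‖x‖ < 1`, which justifies the termwise manipulations.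
-/

theorem mul_lt_one_of_lt_zpow_neg_two {R t : ℝ} (ht : t < R ^ (-2 : ℤ)) : R ^ 2 * t < 1 := by
  rw [zpow_neg, zpow_ofNat] at ht
  rcases (sq_nonneg R).eq_or_lt with hR | hR
  · simp [← hR]
  · simpa [mul_inv_cancel₀ hR.ne'] using mul_lt_mul_of_pos_left ht hR

theorem summable_shift_even_mul_pow {𝕜 : Type*} [NormedDivisionRing 𝕜] [CompleteSpace 𝕜]
    {lam : ℕ → 𝕜} {C R : ℝ} (hgrowth : ∀ n : ℕ, ‖lam n‖ ≤ C * R ^ n)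
    {x : 𝕜} (hx : ‖x‖ < R ^ (-2 : ℤ)) (a : ℕ) :
    Summable fun j : ℕ => lam (a + 2 * j) * x ^ j := by
  have hr := mul_lt_one_of_lt_zpow_neg_two hx
  refine .of_norm_bounded
    ((summable_geometric_of_lt_one (by positivity) hr).mul_left (C * R ^ a)) fun j => ?_
  calc ‖lam (a + 2 * j) * x ^ j‖ = ‖lam (a + 2 * j)‖ * ‖x‖ ^ j := by rw [norm_mul, norm_pow]
    _ ≤ C * R ^ (a + 2 * j) * ‖x‖ ^ j := by gcongr; exact hgrowth _
    _ = C * R ^ a * (R ^ 2 * ‖x‖) ^ j := by ring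

theorem linear_mul_tsum_mul_pow {A : Type*} [CommRing A] [TopologicalSpace A]
    [IsTopologicalRing A] [T2Space A] {f : ℕ → A} {x : A}
    (hf : Summable fun j : ℕ => f j * x ^ j) (p q : A) :
    (p + q * x) * ∑' j : ℕ, f j * x ^ j
      = p * f 0 + ∑' k : ℕ, (p * f (k + 1) + q * f k) * x ^ (k + 1) := by
  have hshift : Summable fun k : ℕ => f (k + 1) * x ^ (k + 1) :=
    (summable_nat_add_iff 1).mpr hf
  have hmul : Summable fun k : ℕ => f k * x ^ (k + 1) := by
    simpa only [pow_succ, mul_assoc] using hf.mul_right x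
  have hzero : ∑' j : ℕ, f j * x ^ j = f 0 + ∑' k : ℕ, f (k + 1) * x ^ (k + 1) := by
    simpa using hf.tsum_eq_zero_add
  have hx : x * ∑' j : ℕ, f j * x ^ j = ∑' k : ℕ, f k * x ^ (k + 1) := by
    rw [← hf.tsum_mul_left]
    exact tsum_congr fun k => by ring
  calc (p + q * x) * ∑' j : ℕ, f j * x ^ j
      = p * ∑' j : ℕ, f j * x ^ j + q * (x * ∑' j : ℕ, f j * x ^ j) := by ring
    _ = p * f 0 + (∑' k : ℕ, p * (f (k + 1) * x ^ (k + 1))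
          + ∑' k : ℕ, q * (f k * x ^ (k + 1))) := by
        rw [hx, hzero, hshift.tsum_mul_left, hmul.tsum_mul_left]
        ring
    _ = p * f 0 + ∑' k : ℕ, (p * f (k + 1) + q * f k) * x ^ (k + 1) := by
        rw [← (hshift.mul_left p).tsum_add (hmul.mul_left q)]
        exact congrArg _ (tsum_congr fun k => by ring)

theorem hecke_recurrence_add_even {A : Type*} [CommRing A] (lam : ℕ → A) (h0 : lam 0 = 1)
    (hHecke : ∀ α β : ℕ, 1 ≤ α → 1 ≤ β →
      lam (α + β) = lam α * lam β - lam (α - 1) * lam (β - 1))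
    {b : ℕ} (hb : 1 ≤ b) (k : ℕ) :
    lam (b + 2 * (k + 1)) + lam (b + 2 * k)
      = lam b * lam (2 * (k + 1)) - (if 2 ≤ b then lam (b - 2) else 0) * lam (2 * k) := by
  have hnext := hHecke b (2 * (k + 1)) hb (by omega)
  rw [show 2 * (k + 1) - 1 = 2 * k + 1 by omega] at hnext
  rcases hb.eq_or_lt with rfl | hb
  · rw [Nat.sub_self, h0, one_mul, add_comm (2 * k)] at hnext
    rw [if_neg (by norm_num)]
    linear_combination hnext
  · have hprev := hHecke (b - 1) (2 * k + 1) (by omega) (by omega)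
    rw [show b - 1 + (2 * k + 1) = b + 2 * k by omega, show b - 1 - 1 = b - 2 by omega,
      Nat.add_sub_cancel] at hprev
    rw [if_pos (show 2 ≤ b from hb)]
    linear_combination hnext + hprev

theorem hecke_local_series_identity_general
    (lam : ℕ → ℂ) (h0 : lam 0 = 1)
    (hHecke : ∀ α β : ℕ, 1 ≤ α → 1 ≤ β →
      lam (α + β) = lam α * lam β - lam (α - 1) * lam (β - 1))
    (C R : ℝ)
    (hgrowth : ∀ n : ℕ, ‖lam n‖ ≤ C * R ^ n)
    (x : ℂ) (hx : ‖x‖ < R ^ (-2 : ℤ)) :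
    ∀ b : ℕ, 1 ≤ b →
      (1 + x) * ∑' j : ℕ, lam (b + 2 * j) * x ^ j
        = (lam b - x * (if 2 ≤ b then lam (b - 2) else 0)) *
            ∑' j : ℕ, lam (2 * j) * x ^ j := by
  intro b hb
  set c := if 2 ≤ b then lam (b - 2) else 0
  have hsum := summable_shift_even_mul_pow hgrowth hx
  have hodd := linear_mul_tsum_mul_pow (hsum b) 1 1
  have heven := linear_mul_tsum_mul_pow (f := fun j => lam (2 * j)) (by simpa using hsum 0)
    (lam b) (-c)
  rw [show 1 + x = 1 + 1 * x by ring, show lam b - x * c = lam b + -c * x by ring, hodd, heven]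
  congr 1
  · simp [h0]
  · exact tsum_congr fun k => by
      linear_combination hecke_recurrence_add_even lam h0 hHecke hb k * x ^ (k + 1)

/-- Local Hecke computation (Lemma `lemma:local`): for a sequence satisfying the
Hecke relation and polynomial-type growth, the generating series identity
`(1 + x) · ∑_{j≥0} λ(b+2j) x^j = (λ(b) − x·λ(b−2)) · ∑_{j≥0} λ(2j) x^j` holds
for every `b ≥ 1`, with `λ(b−2)` interpreted as `0` when `b = 1`. -/
theorem hecke_local_series_identity
    (lam : ℕ → ℂ) (h0 : lam 0 = 1)
    (hHecke : ∀ α β : ℕ, 1 ≤ α → 1 ≤ β →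
      lam (α + β) = lam α * lam β - lam (α - 1) * lam (β - 1))
    (C R : ℝ) (hC : 0 ≤ C) (hR : 1 ≤ R)
    (hgrowth : ∀ n : ℕ, ‖lam n‖ ≤ C * R ^ n)
    (x : ℂ) (hx : ‖x‖ < R ^ (-2 : ℤ)) :
    ∀ b : ℕ, 1 ≤ b →
      (1 + x) * ∑' j : ℕ, lam (b + 2 * j) * x ^ j
        = (lam b - x * (if 2 ≤ b then lam (b - 2) else 0)) *
            ∑' j : ℕ, lam (2 * j) * x ^ j :=
  hecke_local_series_identity_general lam h0 hHecke C R hgrowth x hx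
end

section
/- Let D be a positive integer with D ≡ 1 (mod 4) and set ϖ := (1−D)/4 ∈ ℤ. Let x, y be integers with x ≥ 2, y ≥ 1 and x² + x·y + ϖ·y² = 1. Then gcd(x+1, y) · gcd(x−1, y) = y. -/
/-- First assertion of Lemma `lem:factor`: if `ε = x + y·ω_D` is a norm-one unit
of `ℤ[ω_D]` with `x ≥ 2`, `y ≥ 1`, then `gcd(x+1, y) · gcd(x−1, y) = y`. -/
theorem gcd_mul_gcd_eq_of_norm_one_unit
    (D : ℤ) (hD : 0 < D) (hD4 : D % 4 = 1)
    (varpi : ℤ) (hv : 4 * varpi = 1 - D)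
    (x y : ℤ) (hx : 2 ≤ x) (hy : 1 ≤ y)
    (hunit : x ^ 2 + x * y + varpi * y ^ 2 = 1) :
    (Int.gcd (x + 1) y : ℤ) * (Int.gcd (x - 1) y : ℤ) = y := by
  rw [Int.coe_gcd, Int.coe_gcd]
  set k : ℤ := -(x + varpi * y) with hk
  have hAB : (x + 1) * (x - 1) = y * k := by rw [hk]; linear_combination hunit
  have hGnn : (0:ℤ) ≤ gcd (x - 1) y := by rw [← Int.coe_gcd]; positivity
  have step1 : gcd (x+1) y * gcd (x-1) y
      = gcd ((x+1) * gcd (x-1) y) (y * gcd (x-1) y) := by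
    rw [gcd_mul_right, normalize_gcd]
  have step2 : (x+1) * gcd (x-1) y = gcd ((x+1)*(x-1)) ((x+1)*y) := by
    rw [gcd_mul_left, Int.normalize_of_nonneg (by linarith)]
  have step3 : y * gcd (x-1) y = gcd (y*(x-1)) (y*y) := by
    rw [gcd_mul_left, Int.normalize_of_nonneg (by linarith)]
  have step4 : gcd (gcd (y*k) (y*(x+1))) (gcd (y*(x-1)) (y*y))
      = y * gcd (gcd k (x+1)) (gcd (x-1) y) := by
    have hy0 : (0:ℤ) ≤ y := by linarith
    rw [gcd_mul_left, gcd_mul_left, Int.normalize_of_nonneg hy0, gcd_mul_left,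
      Int.normalize_of_nonneg hy0]
  have key : gcd (x+1) y * gcd (x-1) y
      = y * gcd (gcd k (x+1)) (gcd (x-1) y) := by
    rw [step1, step2, step3, hAB, mul_comm (x+1) y, ← step4]
  set g : ℤ := gcd (gcd k (x+1)) (gcd (x-1) y) with hg
  have hgk : g ∣ k := dvd_trans (gcd_dvd_left _ _) (gcd_dvd_left _ _)
  have hgA : g ∣ x + 1 := dvd_trans (gcd_dvd_left _ _) (gcd_dvd_right _ _)
  have hgB : g ∣ x - 1 := dvd_trans (gcd_dvd_right _ _) (gcd_dvd_left _ _)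
  have hgy : g ∣ y := dvd_trans (gcd_dvd_right _ _) (gcd_dvd_right _ _)
  have hg2 : g ∣ 2 := by
    have := dvd_sub hgA hgB
    simpa using this
  have hgnn : (0:ℤ) ≤ g := by rw [hg, ← Int.coe_gcd]; positivity
  have hgne : g ≠ 0 := by
    intro h
    rw [h] at hgy
    omega
  have hgle : g ≤ 2 := Int.le_of_dvd (by norm_num) hg2
  have hg1 : g = 1 := by
    have h12 : g = 1 ∨ g = 2 := by
      rcases hg2 with ⟨c, hc⟩
      interval_cases g <;> omega
    rcases h12 with h | h
    · exact h
    · exfalso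
      rw [h] at hgk hgA hgy
      have hpy : (2:ℤ) ∣ varpi * y := hgy.mul_left varpi
      rcases hgk with ⟨a, ha⟩
      rcases hgA with ⟨b, hb⟩
      rcases hpy with ⟨c, hc⟩
      rw [hk] at ha
      omega
  rw [key, hg1, mul_one]
end

section
/- Let D be a positive integer with D ≡ 1 (mod 4) and set ϖ := (1−D)/4 ∈ ℤ. Let x, y be integers with x ≥ 2, y ≥ 1 and x² + x·y + ϖ·y² = 1, and set g₁ := gcd(x+1, y), g₂ := gcd(x−1, y). Then (2x+y)² − 4 = D·y²; moreover g₁² divides 2x+y+2, g₂² divides 2x+y−2, and ((2x+y+2)/g₁²) · ((2x+y−2)/g₂²) = D. -/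
/-!
With `N = 2x + y`, the unit equation `Q(x, y) = 1` reads `N² - 4 = D y²`, and the two factors
are norms: `N + 2 = Q(x + 1, y)` and `N - 2 = -Q(x - 1, y)`. As `Q` is a quadratic form, `g₁²`
and `g₂²` divide them. It remains to see that `g₁ g₂ = y`. On the one hand `y` divides
`(x + 1)(x - 1) = -y(x + ϖ y)`, hence `g₁ g₂`; on the other hand `gcd(g₁, g₂) ∣ 2` and
`lcm(g₁, g₂) ∣ y` give `g₁ g₂ ∣ 2y`, and `g₁ g₂ = 2y` would force `4 ∣ D`.
-/

theorem sq_dvd_quadForm {R : Type*} [CommRing R] (c : R) {g u v : R} (hu : g ∣ u) (hv : g ∣ v) :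
    g ^ 2 ∣ u ^ 2 + u * v + c * v ^ 2 := by
  obtain ⟨a, rfl⟩ := hu
  obtain ⟨b, rfl⟩ := hv
  exact ⟨a ^ 2 + a * b + c * b ^ 2, by ring⟩

section GCDMonoid

variable {α : Type*}

theorem dvd_gcd_mul_gcd_of_dvd_mul [CommMonoidWithZero α] [GCDMonoid α] {a b c : α}
    (h : c ∣ a * b) : c ∣ gcd a c * gcd b c :=
  ((gcd_comm' a c).mul_mul (gcd_comm' b c)).dvd_iff_dvd_right.mpr
    (dvd_mul_gcd_of_dvd_mul (dvd_gcd_mul_of_dvd_mul h))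

theorem gcd_mul_gcd_dvd_sub_mul [CommRing α] [GCDMonoid α] (a b c : α) :
    gcd a c * gcd b c ∣ (a - b) * c := by
  rw [← (gcd_mul_lcm (gcd a c) (gcd b c)).dvd_iff_dvd_left]
  exact mul_dvd_mul
    (dvd_sub ((gcd_dvd_left _ _).trans (gcd_dvd_left _ _))
      ((gcd_dvd_right _ _).trans (gcd_dvd_left _ _)))
    (lcm_dvd (gcd_dvd_right _ _) (gcd_dvd_right _ _))

end GCDMonoid

theorem Int.eq_or_eq_two_mul_of_dvd_of_dvd_two_mul {y m : ℤ} (hy : 0 < y) (hm : 0 ≤ m)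
    (hym : y ∣ m) (hmy : m ∣ 2 * y) : m = y ∨ m = 2 * y := by
  obtain ⟨k, rfl⟩ := hym
  have hk : k ∣ 2 := by
    rwa [mul_comm 2, mul_dvd_mul_iff_left hy.ne'] at hmy
  have hk0 : 0 ≤ k := nonneg_of_mul_nonneg_right hm hy
  have hk2 : k ≤ 2 := Int.le_of_dvd two_pos hk
  interval_cases k <;> simp_all [mul_comm]

theorem Int.gcd_add_one_mul_gcd_sub_one_eq_or_eq_two_mul {x y : ℤ} (hy : 0 < y)
    (hdvd : y ∣ (x + 1) * (x - 1)) :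
    (gcd (x + 1) y * gcd (x - 1) y : ℤ) = y ∨
      (gcd (x + 1) y * gcd (x - 1) y : ℤ) = 2 * y := by
  have hnonneg : (0 : ℤ) ≤ gcd (x + 1) y * gcd (x - 1) y := by positivity
  have hdvd_two : (gcd (x + 1) y * gcd (x - 1) y : ℤ) ∣ 2 * y := by
    simpa [Int.coe_gcd] using gcd_mul_gcd_dvd_sub_mul (x + 1) (x - 1) y
  refine eq_or_eq_two_mul_of_dvd_of_dvd_two_mul hy hnonneg ?_ hdvd_two
  simpa only [Int.coe_gcd] using dvd_gcd_mul_gcd_of_dvd_mul hdvd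

theorem factorization_of_D_from_fundamental_unit_general
    (D : ℤ) (hD4 : D % 4 = 1)
    (varpi : ℤ) (hv : 4 * varpi = 1 - D)
    (x y : ℤ) (hy : 1 ≤ y)
    (hunit : x ^ 2 + x * y + varpi * y ^ 2 = 1)
    (g₁ g₂ : ℤ) (hg₁ : g₁ = Int.gcd (x + 1) y) (hg₂ : g₂ = Int.gcd (x - 1) y) :
    (2 * x + y) ^ 2 - 4 = D * y ^ 2 ∧
    g₁ ^ 2 ∣ 2 * x + y + 2 ∧
    g₂ ^ 2 ∣ 2 * x + y - 2 ∧
    ((2 * x + y + 2) / g₁ ^ 2) * ((2 * x + y - 2) / g₂ ^ 2) = D := by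
  have hnorm : (2 * x + y) ^ 2 - 4 = D * y ^ 2 := by linear_combination 4 * hunit - y ^ 2 * hv
  have hfactor : (2 * x + y + 2) * (2 * x + y - 2) = D * y ^ 2 := by linear_combination hnorm
  have h₁ : g₁ ^ 2 ∣ 2 * x + y + 2 := by
    rw [hg₁]
    exact (sq_dvd_quadForm varpi (Int.gcd_dvd_left (x + 1) y) (Int.gcd_dvd_right _ _)).trans
      (dvd_of_eq (by linear_combination hunit))
  have h₂ : g₂ ^ 2 ∣ 2 * x + y - 2 := by
    rw [hg₂, ← dvd_neg]
    exact (sq_dvd_quadForm varpi (Int.gcd_dvd_left (x - 1) y) (Int.gcd_dvd_right _ _)).trans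
      (dvd_of_eq (by linear_combination hunit))
  have hprod : g₁ * g₂ = y := by
    have hy_dvd : y ∣ (x + 1) * (x - 1) := ⟨-(x + varpi * y), by linear_combination hunit⟩
    have h := Int.gcd_add_one_mul_gcd_sub_one_eq_or_eq_two_mul (by omega) hy_dvd
    rw [← hg₁, ← hg₂] at h
    refine h.resolve_right fun h => ?_
    have hsq : (2 * y) ^ 2 ∣ D * y ^ 2 :=
      h ▸ hfactor ▸ mul_pow g₁ g₂ 2 ▸ mul_dvd_mul h₁ h₂
    rw [mul_pow, mul_dvd_mul_iff_right (by positivity)] at hsq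
    omega
  refine ⟨hnorm, h₁, h₂, ?_⟩
  rw [← EuclideanDomain.mul_div_mul_comm_of_dvd_dvd h₁ h₂, ← mul_pow, hprod, hfactor,
    Int.mul_ediv_cancel _ (by positivity)]

/-- Second assertion of Lemma `lem:factor`: with `g₁ = gcd(x+1,y)`,
`g₂ = gcd(x−1,y)`, one has `(2x+y)² − 4 = D·y²`, the squares `g₁²`, `g₂²`
divide `2x+y+2` and `2x+y−2` respectively, and the product of the quotients
equals `D`. -/
theorem factorization_of_D_from_fundamental_unit
    (D : ℤ) (hD : 0 < D) (hD4 : D % 4 = 1)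
    (varpi : ℤ) (hv : 4 * varpi = 1 - D)
    (x y : ℤ) (hx : 2 ≤ x) (hy : 1 ≤ y)
    (hunit : x ^ 2 + x * y + varpi * y ^ 2 = 1)
    (g₁ g₂ : ℤ) (hg₁ : g₁ = Int.gcd (x + 1) y) (hg₂ : g₂ = Int.gcd (x - 1) y) :
    (2 * x + y) ^ 2 - 4 = D * y ^ 2 ∧
    g₁ ^ 2 ∣ 2 * x + y + 2 ∧
    g₂ ^ 2 ∣ 2 * x + y - 2 ∧
    ((2 * x + y + 2) / g₁ ^ 2) * ((2 * x + y - 2) / g₂ ^ 2) = D :=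
  factorization_of_D_from_fundamental_unit_general D hD4 varpi hv x y hy hunit g₁ g₂ hg₁ hg₂
end

section
/- Let D be a positive integer with D ≡ 1 (mod 4) and set ϖ := (1−D)/4 ∈ ℤ. Let x, y be integers with x ≥ 2, y ≥ 1 and x² + x·y + ϖ·y² = 1, and set g₁ := gcd(x+1, y), g₂ := gcd(x−1, y), P₁ := (2x+y+2)/g₁², P₂ := (2x+y−2)/g₂² (these are integers). Then g₁ divides 2ϖy + x + 1 and P₁ divides (2ϖy + x + 1)/g₁; likewise g₂ divides 2ϖy + x − 1 and P₂ divides (2ϖy + x − 1)/g₂. -/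
/-!
With `ε = ±1` write `x + ε = g u`, `y = g t`, where `g = gcd(x + ε, y)` and `u, t` are coprime.
The unit equation gives `2x + y + 2ε = ε g² Q(u, t)`, hence `2u + t = ε g Q(u, t)`, and together
with `(2x + y)² - 4 = D y²` it shows that `Q(u, t)` divides `D t²`. Since `Q(u, t) ≡ u² (mod t)`,
`Q(u, t)` divides the odd number `D`, and then `2 (u + 2ϖt) = ε g Q(u, t) - D t` forces
`Q(u, t) ∣ u + 2ϖt`.
-/

/-- `Q(u, v)`, the norm of `u + v ω_D`. -/
def normForm (ϖ u v : ℤ) : ℤ := u ^ 2 + u * v + ϖ * v ^ 2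

theorem IsCoprime.normForm_left {ϖ u v : ℤ} (h : IsCoprime u v) :
    IsCoprime (normForm ϖ u v) v := by
  have := (h.pow_left (m := 2)).add_mul_right_left (u + ϖ * v)
  rwa [show u ^ 2 + (u + ϖ * v) * v = normForm ϖ u v by unfold normForm; ring] at this

theorem dvd_add_two_mul_of_dvd_odd {D ϖ q u t g : ℤ} (hD : Odd D) (hv : 4 * ϖ = 1 - D)
    (hqD : q ∣ D) (h : 2 * u + t = g * q) : q ∣ u + 2 * ϖ * t := by
  have hq : IsCoprime q 2 := Int.isCoprime_two_right.mpr hD |>.of_isCoprime_of_dvd_left hqD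
  refine hq.dvd_of_dvd_mul_left ?_
  rw [show 2 * (u + 2 * ϖ * t) = q * g - D * t by linear_combination h + t * hv]
  exact dvd_sub (dvd_mul_right q g) (hqD.mul_right t)

theorem gcd_dvd_and_div_dvd_of_normForm_eq_one {D ϖ x y ε : ℤ} (hD : Odd D)
    (hv : 4 * ϖ = 1 - D) (hε : ε ^ 2 = 1) (hy : y ≠ 0) (hunit : normForm ϖ x y = 1)
    (g P : ℤ) (hg : g = Int.gcd (x + ε) y) (hP : P = (2 * x + y + 2 * ε) / g ^ 2) :
    g ∣ 2 * ϖ * y + x + ε ∧ P ∣ (2 * ϖ * y + x + ε) / g := by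
  have hg0 : g ≠ 0 := by rw [hg]; exact_mod_cast (Int.gcd_pos_of_ne_zero_right _ hy).ne'
  obtain ⟨u, t, hgcd, hxu, hyt⟩ := Int.exists_gcd_one (Int.gcd_pos_of_ne_zero_right _ hy)
  rw [← hg] at hxu hyt
  have hut : IsCoprime u t := Int.isCoprime_iff_gcd_eq_one.mpr hgcd
  unfold normForm at hunit
  have hnorm : 2 * x + y + 2 * ε = g ^ 2 * (ε * normForm ϖ u t) := by
    obtain rfl : x = u * g - ε := eq_sub_of_add_eq hxu
    subst hyt
    unfold normForm
    linear_combination (-ε) * hunit - (2 * u * g + t * g - ε) * hε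
  have hlin : 2 * u + t = g * (ε * normForm ϖ u t) :=
    mul_left_cancel₀ hg0 (by linear_combination hnorm - 2 * hxu - hyt)
  have hpell : normForm ϖ u t * (ε * (2 * x + y - 2 * ε)) = D * t ^ 2 :=
    mul_left_cancel₀ (pow_ne_zero 2 hg0) (by
      linear_combination -(2 * x + y - 2 * ε) * hnorm + 4 * hunit - y ^ 2 * hv
        + D * (y + t * g) * hyt - 4 * hε)
  have hQD : normForm ϖ u t ∣ D :=
    hut.normForm_left.pow_right.dvd_of_dvd_mul_right ⟨_, hpell.symm⟩
  have hεQD : ε * normForm ϖ u t ∣ D :=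
    (Dvd.intro ε (by linear_combination normForm ϖ u t * hε)).trans hQD
  have hsum : 2 * ϖ * y + x + ε = g * (u + 2 * ϖ * t) := by linear_combination hxu + 2 * ϖ * hyt
  refine ⟨⟨_, hsum⟩, ?_⟩
  rw [hP, hnorm, hsum, Int.mul_ediv_cancel_left _ (pow_ne_zero 2 hg0),
    Int.mul_ediv_cancel_left _ hg0]
  exact dvd_add_two_mul_of_dvd_odd hD hv hεQD hlin

theorem divisibility_noramanujan_general
    (D : ℤ) (hD4 : D % 4 = 1)
    (varpi : ℤ) (hv : 4 * varpi = 1 - D)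
    (x y : ℤ) (hy : 1 ≤ y)
    (hunit : x ^ 2 + x * y + varpi * y ^ 2 = 1)
    (g₁ g₂ P₁ P₂ : ℤ)
    (hg₁ : g₁ = Int.gcd (x + 1) y) (hg₂ : g₂ = Int.gcd (x - 1) y)
    (hP₁ : P₁ = (2 * x + y + 2) / g₁ ^ 2) (hP₂ : P₂ = (2 * x + y - 2) / g₂ ^ 2) :
    g₁ ∣ 2 * varpi * y + x + 1 ∧
    P₁ ∣ (2 * varpi * y + x + 1) / g₁ ∧
    g₂ ∣ 2 * varpi * y + x - 1 ∧
    P₂ ∣ (2 * varpi * y + x - 1) / g₂ := by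
  have hD : Odd D := Int.odd_iff.mpr (by omega)
  have hy0 : y ≠ 0 := by omega
  have h₁ := gcd_dvd_and_div_dvd_of_normForm_eq_one hD hv (one_pow 2) hy0 hunit g₁ P₁ hg₁
    (by rwa [mul_one])
  have h₂ := gcd_dvd_and_div_dvd_of_normForm_eq_one hD hv (neg_one_sq (R := ℤ)) hy0 hunit g₂ P₂
    (by rwa [← sub_eq_add_neg]) (by rwa [mul_neg_one, ← sub_eq_add_neg])
  simp only [← sub_eq_add_neg] at h₂
  exact ⟨h₁.1, h₁.2, h₂.1, h₂.2⟩

/-- The divisibility claim (eq:noramanujan): `g₁ ∣ 2ϖy + x + 1` and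
`P₁ ∣ (2ϖy + x + 1)/g₁`, and likewise with `g₂`, `P₂` and `2ϖy + x − 1`. -/
theorem divisibility_noramanujan
    (D : ℤ) (hD : 0 < D) (hD4 : D % 4 = 1)
    (varpi : ℤ) (hv : 4 * varpi = 1 - D)
    (x y : ℤ) (hx : 2 ≤ x) (hy : 1 ≤ y)
    (hunit : x ^ 2 + x * y + varpi * y ^ 2 = 1)
    (g₁ g₂ P₁ P₂ : ℤ)
    (hg₁ : g₁ = Int.gcd (x + 1) y) (hg₂ : g₂ = Int.gcd (x - 1) y)
    (hP₁ : P₁ = (2 * x + y + 2) / g₁ ^ 2) (hP₂ : P₂ = (2 * x + y - 2) / g₂ ^ 2) :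
    g₁ ∣ 2 * varpi * y + x + 1 ∧
    P₁ ∣ (2 * varpi * y + x + 1) / g₁ ∧
    g₂ ∣ 2 * varpi * y + x - 1 ∧
    P₂ ∣ (2 * varpi * y + x - 1) / g₂ :=
  divisibility_noramanujan_general D hD4 varpi hv x y hy hunit g₁ g₂ P₁ P₂ hg₁ hg₂ hP₁ hP₂
end

section
/- Let D be a positive integer with D ≡ 1 (mod 4), set ϖ := (1−D)/4 ∈ ℤ and Q(u,v) := u² + u·v + ϖ·v². Let x, y be integers with x ≥ 2, y ≥ 1 and Q(x, y) = 1, and set g₁ := gcd(x+1, y), g₂ := gcd(x−1, y), P₁ := (2x+y+2)/g₁², P₂ := (2x+y−2)/g₂². Let M, N be integers, not both zero, g := gcd(M, N), M₁ := M/g, N₁ := N/g and n := Q(M₁, N₁). Then g₁ divides both M₁·y − N₁·(1+x) and N₁·ϖ·y + (M₁+N₁)·(1+x), g₂ divides both N₁·(1−x) + M₁·y and N₁·ϖ·y + (M₁+N₁)·(x−1), and, setting a₃ := (M₁·y − N₁·(1+x))/g₁, b₃ := (N₁·ϖ·y + (M₁+N₁)·(1+x))/g₁, a₄ := (N₁·(1−x)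 + M₁·y)/g₂, b₄ := (N₁·ϖ·y + (M₁+N₁)·(x−1))/g₂, one has Q(b₃, a₃) = P₁·n and Q(b₄, a₄) = −P₂·n. -/
namespace normForm

variable (ϖ : ℤ)

lemma mul_left_mul_right (g u v : ℤ) : normForm ϖ (g * u) (g * v) = g ^ 2 * normForm ϖ u v := by
  unfold normForm; ring

lemma sq_dvd {g a b : ℤ} (ha : g ∣ a) (hb : g ∣ b) : g ^ 2 ∣ normForm ϖ a b := by
  obtain ⟨p, rfl⟩ := ha
  obtain ⟨q, rfl⟩ := hb
  exact ⟨_, mul_left_mul_right ϖ g p q⟩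

/-- Multiplicativity of the norm for `(a + bω)·(M + Nω̃)`, where `ω̃ = 1 - ω`. -/
lemma compose (a b M N : ℤ) :
    normForm ϖ (N * ϖ * b + (M + N) * a) (M * b - N * a) = normForm ϖ a b * normForm ϖ M N := by
  unfold normForm; ring

lemma compose_div {g a b : ℤ} (ha : g ∣ a) (hb : g ∣ b) (M N : ℤ) :
    normForm ϖ ((N * ϖ * b + (M + N) * a) / g) ((M * b - N * a) / g) =
      normForm ϖ a b / g ^ 2 * normForm ϖ M N := by
  obtain ⟨p, rfl⟩ := ha
  obtain ⟨q, rfl⟩ := hb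
  rcases eq_or_ne g 0 with rfl | hg
  · simp [normForm]
  have hfst : N * ϖ * (g * q) + (M + N) * (g * p) = g * (N * ϖ * q + (M + N) * p) := by ring
  have hsnd : M * (g * q) - N * (g * p) = g * (M * q - N * p) := by ring
  rw [hfst, hsnd, Int.mul_ediv_cancel_left _ hg, Int.mul_ediv_cancel_left _ hg,
    mul_left_mul_right, Int.mul_ediv_cancel_left _ (pow_ne_zero 2 hg), compose]

end normForm

theorem diagterms_Q_values_three_four_general
    (varpi : ℤ)
    (Q : ℤ → ℤ → ℤ) (hQ : ∀ u v, Q u v = u ^ 2 + u * v + varpi * v ^ 2)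
    (x y : ℤ) (hunit : Q x y = 1)
    (g₁ g₂ P₁ P₂ : ℤ)
    (hg₁ : g₁ = Int.gcd (x + 1) y) (hg₂ : g₂ = Int.gcd (x - 1) y)
    (hP₁ : P₁ = (2 * x + y + 2) / g₁ ^ 2) (hP₂ : P₂ = (2 * x + y - 2) / g₂ ^ 2)
    (M₁ N₁ n : ℤ) (hn : n = Q M₁ N₁) :
    (g₁ ∣ M₁ * y - N₁ * (1 + x)) ∧
    (g₁ ∣ N₁ * varpi * y + (M₁ + N₁) * (1 + x)) ∧
    (g₂ ∣ N₁ * (1 - x) + M₁ * y) ∧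
    (g₂ ∣ N₁ * varpi * y + (M₁ + N₁) * (x - 1)) ∧
    Q ((N₁ * varpi * y + (M₁ + N₁) * (1 + x)) / g₁)
      ((M₁ * y - N₁ * (1 + x)) / g₁) = P₁ * n ∧
    Q ((N₁ * varpi * y + (M₁ + N₁) * (x - 1)) / g₂)
      ((N₁ * (1 - x) + M₁ * y) / g₂) = -P₂ * n := by
  obtain rfl : Q = normForm varpi := funext₂ hQ
  have hx₁ : g₁ ∣ 1 + x := add_comm x 1 ▸ hg₁ ▸ Int.gcd_dvd_left _ _
  have hy₁ : g₁ ∣ y := hg₁ ▸ Int.gcd_dvd_right _ _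
  have hx₂ : g₂ ∣ x - 1 := hg₂ ▸ Int.gcd_dvd_left _ _
  have hy₂ : g₂ ∣ y := hg₂ ▸ Int.gcd_dvd_right _ _
  have hQ₁ : normForm varpi (1 + x) y = 2 * x + y + 2 := by
    unfold normForm at hunit ⊢; linear_combination hunit
  have hQ₂ : normForm varpi (x - 1) y = -(2 * x + y - 2) := by
    unfold normForm at hunit ⊢; linear_combination hunit
  have hswap : N₁ * (1 - x) + M₁ * y = M₁ * y - N₁ * (x - 1) := by ring
  refine ⟨(hy₁.mul_left M₁).sub (hx₁.mul_left N₁), (hy₁.mul_left _).add (hx₁.mul_left _),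
    hswap ▸ (hy₂.mul_left M₁).sub (hx₂.mul_left N₁), (hy₂.mul_left _).add (hx₂.mul_left _), ?_, ?_⟩
  · rw [normForm.compose_div varpi hx₁ hy₁, hQ₁, hP₁, hn]
  · have hdvd : g₂ ^ 2 ∣ 2 * x + y - 2 := dvd_neg.mp (hQ₂ ▸ normForm.sq_dvd varpi hx₂ hy₂)
    rw [hswap, normForm.compose_div varpi hx₂ hy₂, hQ₂, Int.neg_ediv_of_dvd hdvd, hP₂, hn]

/-- Cases `j = 3, 4` of Lemma `lem:diagterms`: the displayed integer linear
forms are divisible by `g₁` resp. `g₂`, and with `a₃, b₃, a₄, b₄` the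
corresponding quotients one has `Q(b₃, a₃) = P₁·n` and `Q(b₄, a₄) = −P₂·n`. -/
theorem diagterms_Q_values_three_four
    (D : ℤ) (hD : 0 < D) (hD4 : D % 4 = 1)
    (varpi : ℤ) (hv : 4 * varpi = 1 - D)
    (Q : ℤ → ℤ → ℤ) (hQ : ∀ u v, Q u v = u ^ 2 + u * v + varpi * v ^ 2)
    (x y : ℤ) (hx : 2 ≤ x) (hy : 1 ≤ y) (hunit : Q x y = 1)
    (g₁ g₂ P₁ P₂ : ℤ)
    (hg₁ : g₁ = Int.gcd (x + 1) y) (hg₂ : g₂ = Int.gcd (x - 1) y)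
    (hP₁ : P₁ = (2 * x + y + 2) / g₁ ^ 2) (hP₂ : P₂ = (2 * x + y - 2) / g₂ ^ 2)
    (M N : ℤ) (hMN : ¬(M = 0 ∧ N = 0))
    (g M₁ N₁ n : ℤ) (hg : g = Int.gcd M N)
    (hM₁ : M₁ = M / g) (hN₁ : N₁ = N / g) (hn : n = Q M₁ N₁) :
    (g₁ ∣ M₁ * y - N₁ * (1 + x)) ∧
    (g₁ ∣ N₁ * varpi * y + (M₁ + N₁) * (1 + x)) ∧
    (g₂ ∣ N₁ * (1 - x) + M₁ * y) ∧
    (g₂ ∣ N₁ * varpi * y + (M₁ + N₁) * (x - 1)) ∧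
    Q ((N₁ * varpi * y + (M₁ + N₁) * (1 + x)) / g₁)
      ((M₁ * y - N₁ * (1 + x)) / g₁) = P₁ * n ∧
    Q ((N₁ * varpi * y + (M₁ + N₁) * (x - 1)) / g₂)
      ((N₁ * (1 - x) + M₁ * y) / g₂) = -P₂ * n :=
  diagterms_Q_values_three_four_general varpi Q hQ x y hunit g₁ g₂ P₁ P₂ hg₁ hg₂ hP₁ hP₂ M₁ N₁ n hn
end

section
/- Let D be a positive integer with D ≡ 1 (mod 4), set ϖ := (1−D)/4 ∈ ℤ and Q(u,v) := u² + u·v + ϖ·v². Let x, y be integers with x ≥ 2, y ≥ 1 and Q(x, y) = 1; set g₁ := gcd(x+1, y), g₂ := gcd(x−1, y), P₁ := (2x+y+2)/g₁², P₂ := (2x+y−2)/g₂², and assume P₁ and P₂ are distinct primes (so that D = P₁·P₂ is squarefree). Let M, N be integers, not both zero, with gcd(Q(M,N), D) = 1, and set g := gcd(M, N), M₁ := M/g, N₁ := N/g. Define a₁ := N₁, b₁ := −(M₁+N₁); a₂ := 2M₁+N₁, b₂ := −(M₁+N₁) + 2ϖ·N₁; a₃ := (M₁·y − N₁·(1+x))/g₁,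 b₃ := (N₁·ϖ·y + (M₁+N₁)·(1+x))/g₁; a₄ := (N₁·(1−x) + M₁·y)/g₂, b₄ := (N₁·ϖ·y + (M₁+N₁)·(x−1))/g₂. Then gcd(a_j, b_j) = 1 for each j = 1, 2, 3, 4. -/
lemma isCoprime_ediv_gcd {a b : ℤ} (h : 0 < Int.gcd a b) :
    IsCoprime (a / Int.gcd a b) (b / Int.gcd a b) :=
  Int.isCoprime_iff_gcd_eq_one.mpr (Int.gcd_ediv_gcd_ediv_gcd h)

lemma normForm_mul_mul (ϖ g u v : ℤ) :
    normForm ϖ (g * u) (g * v) = g ^ 2 * normForm ϖ u v := by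
  unfold normForm; ring

lemma normForm_add_mul_normForm_sub {ϖ x y s : ℤ} (hxy : normForm ϖ x y = 1) (hs : s ^ 2 = 1) :
    normForm ϖ (x + s) y * normForm ϖ (x - s) y = -((1 - 4 * ϖ) * y ^ 2) := by
  unfold normForm at *
  linear_combination (x ^ 2 + x * y + ϖ * y ^ 2 + s ^ 2 - 2) * hxy
    + (x ^ 2 + x * y + ϖ * y ^ 2 + s ^ 2 + 2 - (2 * x + y) ^ 2) * hs

lemma isCoprime_normForm_right {ϖ u w : ℤ} (huw : IsCoprime u w) :
    IsCoprime (normForm ϖ u w) w := by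
  rw [show normForm ϖ u w = u ^ 2 + w * (u + ϖ * w) by unfold normForm; ring]
  exact huw.pow_left.add_mul_left_left _

lemma dvd_normForm_of_dvd_of_dvd {ϖ M N u w d : ℤ} (hMN : IsCoprime M N)
    (ha : d ∣ w * M - u * N) (hb : d ∣ u * M + (ϖ * w + u) * N) : d ∣ normForm ϖ u w := by
  obtain ⟨α, β, hαβ⟩ := hMN
  have hM : normForm ϖ u w * M =
      (ϖ * w + u) * (w * M - u * N) + u * (u * M + (ϖ * w + u) * N) := by
    unfold normForm; ring
  have hN : normForm ϖ u w * N = w * (u * M + (ϖ * w + u) * N) - u * (w * M - u * N) := by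
    unfold normForm; ring
  have hQ : normForm ϖ u w = α * (normForm ϖ u w * M) + β * (normForm ϖ u w * N) := by
    linear_combination (-normForm ϖ u w) * hαβ
  rw [hQ, hM, hN]
  exact dvd_add (dvd_mul_of_dvd_right (dvd_add (ha.mul_left _) (hb.mul_left _)) _)
    (dvd_mul_of_dvd_right (dvd_sub (hb.mul_left _) (ha.mul_left _)) _)

lemma sq_mul_normForm (ϖ M N u w : ℤ) :
    w ^ 2 * normForm ϖ M N =
      (w * M - u * N) * (w * M + u * N + w * N) + N ^ 2 * normForm ϖ u w := by
  unfold normForm; ring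

theorem isCoprime_of_normForm_dvd {ϖ M N u w D : ℤ} (hMN : IsCoprime M N) (huw : IsCoprime u w)
    (hdvd : normForm ϖ u w ∣ D * w ^ 2) (hQD : IsCoprime (normForm ϖ M N) D) :
    IsCoprime (w * M - u * N) (u * M + (ϖ * w + u) * N) := by
  rw [← gcd_isUnit_iff]
  set d := gcd (w * M - u * N) (u * M + (ϖ * w + u) * N)
  have ha : d ∣ w * M - u * N := gcd_dvd_left _ _
  have hdQ : d ∣ normForm ϖ u w := dvd_normForm_of_dvd_of_dvd hMN ha (gcd_dvd_right _ _)
  have hdw : IsCoprime d (w ^ 2) :=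
    (isCoprime_normForm_right huw).pow_right.of_isCoprime_of_dvd_left hdQ
  have hdD : d ∣ D := hdw.dvd_of_dvd_mul_right (hdQ.trans hdvd)
  have hdQMN : d ∣ normForm ϖ M N := by
    refine hdw.dvd_of_dvd_mul_left ?_
    rw [sq_mul_normForm ϖ M N u w]
    exact dvd_add (dvd_mul_of_dvd_left ha _) (hdQ.mul_left _)
  exact hQD.isUnit_of_dvd' hdQMN hdD

theorem isCoprime_div_gcd_of_normForm_eq_one {ϖ x y s M N : ℤ} (hxy : normForm ϖ x y = 1)
    (hs : s ^ 2 = 1) (hy : y ≠ 0) (hMN : IsCoprime M N)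
    (hQD : IsCoprime (normForm ϖ M N) (1 - 4 * ϖ)) :
    IsCoprime ((M * y - N * (x + s)) / Int.gcd (x + s) y)
      ((N * ϖ * y + (M + N) * (x + s)) / Int.gcd (x + s) y) := by
  have hgcd := Int.gcd_pos_of_ne_zero_right (x + s) hy
  set g : ℤ := ↑(Int.gcd (x + s) y)
  have hg : g ≠ 0 := by positivity
  set u := (x + s) / g
  set w := y / g
  have hu : g * u = x + s := Int.mul_ediv_cancel' (Int.gcd_dvd_left _ _)
  have hw : g * w = y := Int.mul_ediv_cancel' (Int.gcd_dvd_right _ _)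
  have hQu : g ^ 2 * normForm ϖ u w = normForm ϖ (x + s) y := by
    rw [← normForm_mul_mul, hu, hw]
  have hdvd : normForm ϖ u w ∣ (1 - 4 * ϖ) * w ^ 2 := by
    refine ⟨-normForm ϖ (x - s) y, mul_left_cancel₀ (pow_ne_zero 2 hg) ?_⟩
    linear_combination (normForm ϖ (x - s) y) * hQu + normForm_add_mul_normForm_sub hxy hs
      + (1 - 4 * ϖ) * (g * w + y) * hw
  have ha : M * y - N * (x + s) = g * (w * M - u * N) := by
    linear_combination N * hu - M * hw
  have hb : N * ϖ * y + (M + N) * (x + s) = g * (u * M + (ϖ * w + u) * N) := by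
    linear_combination -(N * ϖ * hw + (M + N) * hu)
  rw [ha, hb, Int.mul_ediv_cancel_left _ hg, Int.mul_ediv_cancel_left _ hg]
  exact isCoprime_of_normForm_dvd hMN (isCoprime_ediv_gcd hgcd) hdvd hQD

theorem diagterms_coprimality_general
    (D : ℤ)
    (varpi : ℤ) (hv : 4 * varpi = 1 - D)
    (Q : ℤ → ℤ → ℤ) (hQ : ∀ u v, Q u v = u ^ 2 + u * v + varpi * v ^ 2)
    (x y : ℤ) (hy : 1 ≤ y) (hunit : Q x y = 1)
    (g₁ g₂ : ℤ)
    (hg₁ : g₁ = Int.gcd (x + 1) y) (hg₂ : g₂ = Int.gcd (x - 1) y)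
    (M N : ℤ) (hMN : ¬(M = 0 ∧ N = 0)) (hcop : Int.gcd (Q M N) D = 1)
    (g M₁ N₁ : ℤ) (hg : g = Int.gcd M N)
    (hM₁ : M₁ = M / g) (hN₁ : N₁ = N / g) :
    Int.gcd N₁ (-(M₁ + N₁)) = 1 ∧
    Int.gcd (2 * M₁ + N₁) (-(M₁ + N₁) + 2 * varpi * N₁) = 1 ∧
    Int.gcd ((M₁ * y - N₁ * (1 + x)) / g₁)
      ((N₁ * varpi * y + (M₁ + N₁) * (1 + x)) / g₁) = 1 ∧
    Int.gcd ((N₁ * (1 - x) + M₁ * y) / g₂)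
      ((N₁ * varpi * y + (M₁ + N₁) * (x - 1)) / g₂) = 1 := by
  obtain rfl : Q = normForm varpi := funext fun u => funext fun v => hQ u v
  obtain rfl : D = 1 - 4 * varpi := by linarith
  subst hg₁ hg₂
  have hgcd : 0 < Int.gcd M N := Nat.pos_of_ne_zero (mt Int.gcd_eq_zero_iff.mp hMN)
  have hMN₁ : IsCoprime M₁ N₁ := hM₁ ▸ hN₁ ▸ hg ▸ isCoprime_ediv_gcd hgcd
  have hQD : IsCoprime (normForm varpi M₁ N₁) (1 - 4 * varpi) := by
    refine IsCoprime.of_mul_left_right (x := g ^ 2) ?_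
    rw [← normForm_mul_mul, hM₁, hN₁, hg, Int.mul_ediv_cancel' (Int.gcd_dvd_left _ _),
      Int.mul_ediv_cancel' (Int.gcd_dvd_right _ _)]
    exact Int.isCoprime_iff_gcd_eq_one.mpr hcop
  simp only [← Int.isCoprime_iff_gcd_eq_one]
  refine ⟨?_, ?_, ?_, ?_⟩
  · convert isCoprime_of_normForm_dvd (u := -1) (w := 0) hMN₁ isCoprime_one_left.neg_left
      (by simp) hQD using 1 <;> ring
  · convert isCoprime_of_normForm_dvd (u := -1) (w := 2) hMN₁ (by norm_num)
      ⟨-4, by unfold normForm; ring⟩ hQD using 1 <;> ring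
  · convert isCoprime_div_gcd_of_normForm_eq_one (s := 1) hunit (one_pow 2) (by omega) hMN₁ hQD
      using 3 <;> ring
  · have := isCoprime_div_gcd_of_normForm_eq_one (s := -1) hunit (by norm_num) (by omega)
      hMN₁ hQD
    rw [← sub_eq_add_neg] at this
    convert this using 3
    ring

/-- Coprimality assertion of Lemma `lem:diagterms`: if `gcd(Q(M,N), D) = 1`
then `gcd(a_j, b_j) = 1` for `j = 1, 2, 3, 4`. -/
theorem diagterms_coprimality
    (D : ℤ) (hD : 0 < D) (hD4 : D % 4 = 1)
    (varpi : ℤ) (hv : 4 * varpi = 1 - D)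
    (Q : ℤ → ℤ → ℤ) (hQ : ∀ u v, Q u v = u ^ 2 + u * v + varpi * v ^ 2)
    (x y : ℤ) (hx : 2 ≤ x) (hy : 1 ≤ y) (hunit : Q x y = 1)
    (g₁ g₂ P₁ P₂ : ℤ)
    (hg₁ : g₁ = Int.gcd (x + 1) y) (hg₂ : g₂ = Int.gcd (x - 1) y)
    (hP₁ : P₁ = (2 * x + y + 2) / g₁ ^ 2) (hP₂ : P₂ = (2 * x + y - 2) / g₂ ^ 2)
    (hP₁p : Prime P₁) (hP₂p : Prime P₂) (hPne : P₁ ≠ P₂)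
    (M N : ℤ) (hMN : ¬(M = 0 ∧ N = 0)) (hcop : Int.gcd (Q M N) D = 1)
    (g M₁ N₁ : ℤ) (hg : g = Int.gcd M N)
    (hM₁ : M₁ = M / g) (hN₁ : N₁ = N / g) :
    Int.gcd N₁ (-(M₁ + N₁)) = 1 ∧
    Int.gcd (2 * M₁ + N₁) (-(M₁ + N₁) + 2 * varpi * N₁) = 1 ∧
    Int.gcd ((M₁ * y - N₁ * (1 + x)) / g₁)
      ((N₁ * varpi * y + (M₁ + N₁) * (1 + x)) / g₁) = 1 ∧
    Int.gcd ((N₁ * (1 - x) + M₁ * y) / g₂)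
      ((N₁ * varpi * y + (M₁ + N₁) * (x - 1)) / g₂) = 1 :=
  diagterms_coprimality_general D varpi hv Q hQ x y hy hunit g₁ g₂ hg₁ hg₂ M N hMN hcop g M₁ N₁ hg
    hM₁ hN₁
end

section
/- Let D be a positive integer with D ≡ 1 (mod 4), set ϖ := (1−D)/4 ∈ ℤ and ω := (1+√D)/2 ∈ ℝ. Let x, y be integers with x ≥ 2, y ≥ 1 and x² + x·y + ϖ·y² = 1, and set ε := x + y·ω. For integers r, s put γ := r + s·ω and γ̃ := r + s·(1−ω). Then the following identities hold in ℝ: ε·γ̃ − γ = (gcd(x−1, x+ϖy) + gcd(y, x+1)·ω) · (y·r − (x+1)·s)/gcd(y, x+1), and ε·γ̃ + γ = (gcd(x+1, x+ϖy) + gcd(y, x−1)·ω) · (y·r + (1−x)·s)/gcd(y, x−1). Here all gcds are nonnegative, gcd(y, x+1) divides y·r − (x+1)·s, and gcd(y, x−1) divides y·r + (1−x)·s. -/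
/-!
Since `ω² = ω - ϖ`, one has `ε·γ̃ + t·γ = ((x + t)·r + (x + ϖy)·s) + (y·r - (x - t)·s)·ω`, and for
`t = ∓1` it remains to see that the rational part is `gcd(x ± 1, x + ϖy) / gcd(y, x ∓ 1)` times the
coefficient of `ω`. The unit equation factors as `(x - 1)(x + 1) = y·d` with `d = -(x + ϖy)`, and
whenever `a·b = c·d` (with `a, c ≥ 0`) we have `c·gcd(a, d) = gcd(ca, ab) = a·gcd(c, b)`; applied to
both factorizations this gives the required proportionality.
-/

theorem Int.mul_gcd_eq_mul_gcd_of_mul_eq_mul {a b c d : ℤ} (ha : 0 ≤ a) (hc : 0 ≤ c)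
    (h : a * b = c * d) : c * Int.gcd a d = a * Int.gcd c b := by
  calc c * (Int.gcd a d : ℤ) = Int.gcd (c * a) (c * d) := by
        rw [Int.gcd_mul_left, Int.natCast_mul, Int.natAbs_of_nonneg hc]
    _ = Int.gcd (a * c) (a * b) := by rw [mul_comm c a, h]
    _ = a * Int.gcd c b := by
        rw [Int.gcd_mul_left, Int.natCast_mul, Int.natAbs_of_nonneg ha]

theorem Int.gcd_mul_sub_mul_eq {u v y d : ℤ} (hu : 0 ≤ u) (hv : 0 ≤ v) (hy : 0 ≤ y) (hd : 0 ≤ d)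
    (h : u * v = y * d) (r s : ℤ) :
    Int.gcd y v * (u * r - d * s) = Int.gcd u d * (y * r - v * s) := by
  have hyu := Int.mul_gcd_eq_mul_gcd_of_mul_eq_mul hu hy h
  have hdv := Int.mul_gcd_eq_mul_gcd_of_mul_eq_mul hv hd (a := v) (b := u) (d := y)
    (by linear_combination h)
  rw [Int.gcd_comm v y, Int.gcd_comm d u] at hdv
  linear_combination -r * hyu - s * hdv

theorem Int.gcd_dvd_mul_sub_mul (a b r s : ℤ) : (Int.gcd a b : ℤ) ∣ a * r - b * s :=
  dvd_sub ((Int.gcd_dvd_left a b).mul_right r) ((Int.gcd_dvd_right a b).mul_right s)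

theorem sq_one_add_sqrt_div_two {D varpi : ℝ} (hD : 0 ≤ D) (hv : 4 * varpi = 1 - D) :
    ((1 + √D) / 2) ^ 2 = (1 + √D) / 2 - varpi := by
  linear_combination Real.sq_sqrt hD / 4 + hv / 4

theorem mul_conj_add_mul_eq {ω varpi : ℝ} (hω : ω ^ 2 = ω - varpi) (x y r s t : ℝ) :
    (x + y * ω) * (r + s * (1 - ω)) + t * (r + s * ω)
      = ((x + t) * r + (x + varpi * y) * s) + (y * r - (x - t) * s) * ω := by
  linear_combination (-y * s) * hω

theorem add_mul_eq_gcd_add_gcd_mul_mul_div_gcd {u v y d : ℤ} (hu : 0 ≤ u) (hv : 0 ≤ v) (hy : 0 < y)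
    (hd : 0 ≤ d) (h : u * v = y * d) (r s : ℤ) (ω : ℝ) :
    ((u * r - d * s : ℤ) : ℝ) + ((y * r - v * s : ℤ) : ℝ) * ω
      = ((Int.gcd u d : ℝ) + (Int.gcd y v : ℝ) * ω)
          * (((y * r - v * s : ℤ) : ℝ) / (Int.gcd y v : ℝ)) := by
  have hg : (Int.gcd y v : ℝ) ≠ 0 := by
    exact_mod_cast (Int.gcd_pos_of_ne_zero_left v hy.ne').ne'
  have key : ((Int.gcd y v : ℤ) : ℝ) * ((u * r - d * s : ℤ) : ℝ)
      = ((Int.gcd u d : ℤ) : ℝ) * ((y * r - v * s : ℤ) : ℝ) := by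
    exact_mod_cast Int.gcd_mul_sub_mul_eq hu hv hy.le hd h r s
  push_cast at key ⊢
  field_simp
  linear_combination key

theorem algebra_factorization_identities_general
    (D : ℤ) (hD : 0 < D)
    (varpi : ℤ) (hv : 4 * varpi = 1 - D)
    (ω : ℝ) (hω : ω = (1 + Real.sqrt D) / 2)
    (x y : ℤ) (hx : 2 ≤ x) (hy : 1 ≤ y)
    (hunit : x ^ 2 + x * y + varpi * y ^ 2 = 1)
    (r s : ℤ) :
    ((Int.gcd y (x + 1) : ℤ) ∣ y * r - (x + 1) * s) ∧
    ((Int.gcd y (x - 1) : ℤ) ∣ y * r + (1 - x) * s) ∧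
    ((x : ℝ) + y * ω) * ((r : ℝ) + s * (1 - ω)) - ((r : ℝ) + s * ω)
      = ((Int.gcd (x - 1) (x + varpi * y) : ℝ) + (Int.gcd y (x + 1) : ℝ) * ω)
          * (((y * r - (x + 1) * s : ℤ) : ℝ) / (Int.gcd y (x + 1) : ℝ)) ∧
    ((x : ℝ) + y * ω) * ((r : ℝ) + s * (1 - ω)) + ((r : ℝ) + s * ω)
      = ((Int.gcd (x + 1) (x + varpi * y) : ℝ) + (Int.gcd y (x - 1) : ℝ) * ω)
          * (((y * r + (1 - x) * s : ℤ) : ℝ) / (Int.gcd y (x - 1) : ℝ)) := by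
  have hω2 : ω ^ 2 = ω - varpi := by
    rw [hω]; exact sq_one_add_sqrt_div_two (by positivity) (by exact_mod_cast hv)
  have hfac : (x - 1) * (x + 1) = y * -(x + varpi * y) := by linear_combination hunit
  have hd : 0 ≤ -(x + varpi * y) := by nlinarith
  have hsign : y * r + (1 - x) * s = y * r - (x - 1) * s := by ring
  rw [hsign, ← Int.gcd_neg (b := x + varpi * y), ← Int.gcd_neg (a := x + 1)]
  refine ⟨Int.gcd_dvd_mul_sub_mul _ _ r s, Int.gcd_dvd_mul_sub_mul _ _ r s, ?_, ?_⟩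
  · rw [sub_eq_add_neg, ← neg_one_mul, mul_conj_add_mul_eq hω2,
      ← add_mul_eq_gcd_add_gcd_mul_mul_div_gcd (by omega) (by omega) (by omega) hd hfac r s ω]
    push_cast; ring
  · rw [← one_mul ((r : ℝ) + s * ω), mul_conj_add_mul_eq hω2,
      ← add_mul_eq_gcd_add_gcd_mul_mul_div_gcd (by omega) (by omega) (by omega) hd
        (by linear_combination hfac) r s ω]
    push_cast; ring

/-- Factorization identities from the proof of Lemma `lem:algebra`:
with `ε = x + y·ω`, `γ = r + s·ω`, `γ̃ = r + s·(1−ω)`, one has the two displayed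
real identities, together with the nonnegativity/divisibility facts making the
divisions exact. -/
theorem algebra_factorization_identities
    (D : ℤ) (hD : 0 < D) (hD4 : D % 4 = 1)
    (varpi : ℤ) (hv : 4 * varpi = 1 - D)
    (ω : ℝ) (hω : ω = (1 + Real.sqrt D) / 2)
    (x y : ℤ) (hx : 2 ≤ x) (hy : 1 ≤ y)
    (hunit : x ^ 2 + x * y + varpi * y ^ 2 = 1)
    (r s : ℤ) :
    ((Int.gcd y (x + 1) : ℤ) ∣ y * r - (x + 1) * s) ∧
    ((Int.gcd y (x - 1) : ℤ) ∣ y * r + (1 - x) * s) ∧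
    ((x : ℝ) + y * ω) * ((r : ℝ) + s * (1 - ω)) - ((r : ℝ) + s * ω)
      = ((Int.gcd (x - 1) (x + varpi * y) : ℝ) + (Int.gcd y (x + 1) : ℝ) * ω)
          * (((y * r - (x + 1) * s : ℤ) : ℝ) / (Int.gcd y (x + 1) : ℝ)) ∧
    ((x : ℝ) + y * ω) * ((r : ℝ) + s * (1 - ω)) + ((r : ℝ) + s * ω)
      = ((Int.gcd (x + 1) (x + varpi * y) : ℝ) + (Int.gcd y (x - 1) : ℝ) * ω)
          * (((y * r + (1 - x) * s : ℤ) : ℝ) / (Int.gcd y (x - 1) : ℝ)) :=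
  algebra_factorization_identities_general D hD varpi hv ω hω x y hx hy hunit r s
end

section
/- Let α ≥ 0 and m ≥ 1 be integers with m ≡ 1 (mod 8), and set n := 4^α·m. Let χ₈ be the real character modulo 8 with χ₈(d) = 1 for d ≡ ±1 (mod 8) and χ₈(d) = −1 for d ≡ ±3 (mod 8), and let χ₋₄ be the character modulo 4 with χ₋₄(d) = 1 for d ≡ 1 (mod 4) and χ₋₄(d) = −1 for d ≡ 3 (mod 4). For an integer k ≥ 2 define A_k := ∑ χ₈(d)^k·exp(2πi·n·d/2^k) and B_k := ∑ χ₋₄(d)·χ₈(d)^k·exp(2πi·n·d/2^k), both sums being over odd integers 1 ≤ d ≤ 2^k. Then: A_k = 2^(k−1) if k is even and k ≤ 2α; A_k = 2√2·4^α if k = 2α+3; and A_k = 0 otherwise. Also: B_k = 2i·4^α if k = 2α+2; B_k = 2√2·i·4^α if k = 2α+3; and B_k = 0 otherwise. -/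
/-!
Writing `d = 8t + r`, a sum of an `8`-periodic function against `exp (2πi n d / 2^k)` factors
into a geometric sum over `t`, equal to `2^(k-3)` or `0` according as `2^(k-3) ∣ n`, times a sum
over the residues `r` against powers of the eighth root of unity `ω₈ ^ (n / 2^(k-3))`.
For `n = 4^α m` with `m ≡ 1 (mod 8)` that root is `1`, `-1`, `i` or `ω₈` according to
`2α + 3 - k`, and in the last case the residue sums are the classical Gauss sums
`2√2` of `χ₈` and `2√2 i` of `χ₈' = χ₄ χ₈`. For `k = 2` there is no room for the
factorisation and the two terms are computed directly.
-/

open Finset Complex Real ZMod Function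

theorem Function.Periodic.sum_range_mul_mul_pow {R : Type*} [CommSemiring R] {g : ℕ → R} {P : ℕ}
    (hg : Periodic g P) (z : R) (M : ℕ) :
    ∑ d ∈ range (P * M), g d * z ^ d
      = (∑ t ∈ range M, (z ^ P) ^ t) * ∑ r ∈ range P, g r * z ^ r := by
  induction M with
  | zero => simp
  | succ M ih =>
    have hshift (r : ℕ) : g (P * M + r) * z ^ (P * M + r) = (z ^ P) ^ M * (g r * z ^ r) := by
      have hgr : g (r + M * P) = g r := by simpa using hg.nat_mul M r
      rw [add_comm, mul_comm P, hgr, pow_add, pow_mul']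
      ring
    simp only [mul_add, mul_one, sum_range_add, ih, hshift, ← mul_sum, sum_range_succ, add_mul]

theorem IsPrimitiveRoot.sum_range_pow_pow {K : Type*} [Field K] {η : K} {M : ℕ}
    (hη : IsPrimitiveRoot η M) (n : ℕ) :
    ∑ t ∈ range M, (η ^ n) ^ t = if M ∣ n then (M : K) else 0 := by
  split_ifs with hn
  · simp [(hη.pow_eq_one_iff_dvd n).2 hn]
  · rw [geom_sum_eq (mt (hη.pow_eq_one_iff_dvd n).1 hn), ← pow_mul, mul_comm, pow_mul,
      hη.pow_eq_one, one_pow, sub_self, zero_div]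

theorem pow_four_pow_mul {M : Type*} [Monoid M] {x : M} (hx : x ^ 4 = 1) {m : ℕ}
    (hm : m % 4 = 1) (α : ℕ) : x ^ (4 ^ α * m) = if α = 0 then x else 1 := by
  rcases α with _ | α
  · rw [pow_zero, one_mul, pow_eq_pow_mod m hx, hm, pow_one, if_pos rfl]
  · rw [pow_succ, mul_comm _ 4, mul_assoc, pow_mul, hx, one_pow, if_neg α.succ_ne_zero]

theorem ZMod.periodic_natCast_comp {N : ℕ} {β : Type*} (φ : ZMod N → β) :
    Periodic (fun d : ℕ => φ d) N := fun d => by simp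

theorem MulChar.natCast_eq_zero_of_even {N : ℕ} {R : Type*} [CommMonoidWithZero R]
    (χ : MulChar (ZMod N) R) (hN : Even N) {d : ℕ} (hd : Even d) : χ d = 0 :=
  χ.map_nonunit fun h => Nat.not_coprime_of_dvd_of_dvd one_lt_two hd.two_dvd hN.two_dvd
    ((ZMod.isUnit_iff_coprime d N).1 h)

theorem sum_filter_odd_Ioc_eq_sum_range {M : Type*} [AddCommMonoid M] {F : ℕ → M}
    (hF : ∀ d, Even d → F d = 0) {N : ℕ} (hN : Even N) :
    ∑ d ∈ (Ioc 0 N).filter Odd, F d = ∑ d ∈ range N, F d := by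
  have hset : (Ioc 0 N).filter Odd = (range N).filter Odd := by
    ext d
    simp only [mem_filter, mem_Ioc, mem_range]
    constructor
    · rintro ⟨⟨-, hdN⟩, hd⟩
      exact ⟨lt_of_le_of_ne hdN (by rintro rfl; exact Nat.not_even_iff_odd.2 hd hN), hd⟩
    · rintro ⟨hdN, hd⟩
      exact ⟨⟨hd.pos, hdN.le⟩, hd⟩
  rw [hset, sum_filter_of_ne fun d _ h => Nat.not_even_iff_odd.1 (mt (hF d) h)]

theorem exp_two_pi_I_mul_mul_div (a b N : ℕ) :
    exp (2 * π * I * a * b / N) = exp (2 * π * I / N) ^ (a * b) := by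
  rw [← Complex.exp_nat_mul]
  push_cast
  ring_nf

theorem sum_filter_odd_mul_exp {f : ℕ → ℂ} (hf : Periodic f 8) (hf0 : ∀ d, Even d → f d = 0)
    {M : ℕ} (hM : M ≠ 0) (n : ℕ) :
    ∑ d ∈ (Ioc 0 (8 * M)).filter Odd, f d * exp (2 * π * I * n * d / (8 * M : ℕ))
      = (if M ∣ n then (M : ℂ) else 0) *
          ∑ r ∈ range 8, f r * exp (2 * π * I / (8 * M : ℕ)) ^ (n * r) := by
  have hζ : IsPrimitiveRoot (exp (2 * π * I / (8 * M : ℕ))) (8 * M) :=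
    isPrimitiveRoot_exp _ (by positivity)
  simp only [exp_two_pi_I_mul_mul_div, pow_mul]
  rw [sum_filter_odd_Ioc_eq_sum_range (fun d hd => by rw [hf0 d hd, zero_mul])
      ((by decide : Even 8).mul_right M), hf.sum_range_mul_mul_pow, pow_right_comm _ n 8,
    (hζ.pow (by positivity) rfl).sum_range_pow_pow]

theorem sum_filter_odd_mul_exp_four (f : ℕ → ℂ) (n : ℕ) :
    ∑ d ∈ (Ioc 0 (2 ^ 2)).filter Odd, f d * exp (2 * π * I * n * d / (2 ^ 2 : ℕ))
      = f 1 * I ^ n + f 3 * (-I) ^ n := by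
  have hset : (Ioc 0 (2 ^ 2)).filter Odd = {1, 3} := by decide
  have hI : exp (2 * π * I / (2 ^ 2 : ℕ)) = I := by
    rw [show 2 * π * I / (2 ^ 2 : ℕ) = π / 2 * I by push_cast; ring, exp_pi_div_two_mul_I]
  rw [hset, sum_pair (by norm_num), exp_two_pi_I_mul_mul_div, exp_two_pi_I_mul_mul_div, hI, mul_one,
    pow_mul', I_pow_three]

local notation "ω₈" => exp (2 * π * I / 8)

theorem exp_two_pi_I_div_eight : ω₈ = √2 / 2 * (1 + I) := by
  have h : 2 * (π : ℂ) * I / 8 = (π / 4 : ℝ) * I := by push_cast; ring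
  rw [h, exp_mul_I, ← ofReal_cos, ← ofReal_sin, cos_pi_div_four, sin_pi_div_four]
  push_cast
  ring

theorem exp_two_pi_I_div_eight_sq : ω₈ ^ 2 = I := by
  have h : (√2 : ℂ) ^ 2 = 2 := by norm_cast; simp
  rw [exp_two_pi_I_div_eight]
  linear_combination (1 / 2 * I) * h + I_sq * ((√2 : ℂ) ^ 2 / 4)

theorem exp_two_pi_I_div_eight_pow_four : ω₈ ^ 4 = -1 := by
  rw [show 4 = 2 * 2 by rfl, pow_mul, exp_two_pi_I_div_eight_sq, I_sq]

theorem exp_two_pi_I_div_eight_pow_eight : ω₈ ^ 8 = 1 := by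
  rw [show 8 = 4 * 2 by rfl, pow_mul, exp_two_pi_I_div_eight_pow_four]
  norm_num

theorem exp_two_pi_I_div_eight_pow_two_pow_add_three (j : ℕ) : ω₈ ^ 2 ^ (j + 3) = 1 := by
  rw [pow_add, pow_mul', show 2 ^ 3 = 8 by rfl, exp_two_pi_I_div_eight_pow_eight, one_pow]

theorem exp_two_pi_I_div_eight_mul_pow (M : ℕ) (hM : M ≠ 0) :
    exp (2 * π * I / (8 * M : ℕ)) ^ M = ω₈ := by
  rw [← Complex.exp_nat_mul]
  congr 1
  push_cast
  field_simp

theorem sum_filter_odd_mul_exp_two_pow_of_le {f : ℕ → ℂ} (hf : Periodic f 8)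
    (hf0 : ∀ d, Even d → f d = 0) {α m k : ℕ} (hm : m % 8 = 1) (hk3 : 3 ≤ k)
    (hk : k ≤ 2 * α + 3) :
    ∑ d ∈ (Ioc 0 (2 ^ k)).filter Odd, f d * exp (2 * π * I * (4 ^ α * m : ℕ) * d / (2 ^ k : ℕ))
      = 2 ^ (k - 3) * ∑ r ∈ range 8, f r * (ω₈ ^ 2 ^ (2 * α + 3 - k)) ^ r := by
  have h2k : 2 ^ k = 8 * 2 ^ (k - 3) := by
    rw [← pow_sub_mul_pow 2 hk3, mul_comm]; rfl
  have hn : 4 ^ α * m = 2 ^ (k - 3) * (2 ^ (2 * α + 3 - k) * m) := by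
    rw [← mul_assoc, ← pow_add, show k - 3 + (2 * α + 3 - k) = 2 * α by omega, pow_mul]
    rfl
  have hω : (ω₈ ^ 2 ^ (2 * α + 3 - k)) ^ m = ω₈ ^ 2 ^ (2 * α + 3 - k) := by
    rw [pow_eq_pow_mod m (by rw [pow_right_comm, exp_two_pi_I_div_eight_pow_eight, one_pow]), hm,
      pow_one]
  rw [h2k, hn, sum_filter_odd_mul_exp hf hf0 (by positivity), if_pos (dvd_mul_right _ _)]
  simp only [pow_mul, exp_two_pi_I_div_eight_mul_pow _ (by positivity : 2 ^ (k - 3) ≠ 0), hω]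
  norm_num

theorem sum_filter_odd_mul_exp_two_pow_of_lt {f : ℕ → ℂ} (hf : Periodic f 8)
    (hf0 : ∀ d, Even d → f d = 0) {α m k : ℕ} (hm : m % 8 = 1) (hk : 2 * α + 3 < k) :
    ∑ d ∈ (Ioc 0 (2 ^ k)).filter Odd, f d * exp (2 * π * I * (4 ^ α * m : ℕ) * d / (2 ^ k : ℕ))
      = 0 := by
  have h2k : 2 ^ k = 8 * 2 ^ (k - 3) := by
    rw [← pow_sub_mul_pow 2 (by omega : 3 ≤ k), mul_comm]; rfl
  have hndvd : ¬ 2 ^ (k - 3) ∣ 4 ^ α * m := by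
    intro h
    have h4 : 4 ^ α = 2 ^ (2 * α) := by rw [pow_mul]; rfl
    have h2 : 2 ^ (2 * α) * 2 ∣ 2 ^ (2 * α) * m := by
      rw [← pow_succ, ← h4]; exact (pow_dvd_pow 2 (by omega)).trans h
    have := (Nat.mul_dvd_mul_iff_left (by positivity)).1 h2
    omega
  rw [h2k, sum_filter_odd_mul_exp hf hf0 (by positivity), if_neg hndvd, zero_mul]

theorem sum_range_eight_χ₈_pow_mul_pow {k : ℕ} (hk : k ≠ 0) (u : ℂ) :
    ∑ r ∈ range 8, ((χ₈ r : ℤ) : ℂ) ^ k * u ^ r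
      = u + (-1) ^ k * u ^ 3 + (-1) ^ k * u ^ 5 + u ^ 7 := by
  simp [sum_range_succ, hk]

theorem sum_range_eight_χ₄_mul_χ₈_pow_mul_pow (k : ℕ) (u : ℂ) :
    ∑ r ∈ range 8, ((χ₄ r : ℤ) : ℂ) * ((χ₈ r : ℤ) : ℂ) ^ k * u ^ r
      = u - (-1) ^ k * u ^ 3 + (-1) ^ k * u ^ 5 - u ^ 7 := by
  simp only [χ₄_apply, χ₈_apply, sum_range_succ, range_one, sum_singleton]
  push_cast
  ring

theorem gaussSum_χ₈_eq : ω₈ - ω₈ ^ 3 - ω₈ ^ 5 + ω₈ ^ 7 = 2 * √2 := by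
  rw [show ω₈ ^ 3 = ω₈ ^ 2 * ω₈ by ring, show ω₈ ^ 5 = (ω₈ ^ 2) ^ 2 * ω₈ by ring,
    show ω₈ ^ 7 = (ω₈ ^ 2) ^ 3 * ω₈ by ring, exp_two_pi_I_div_eight_sq, I_pow_three, I_sq,
    exp_two_pi_I_div_eight]
  linear_combination (-√2 : ℂ) * I_sq

theorem gaussSum_χ₈'_eq : ω₈ + ω₈ ^ 3 - ω₈ ^ 5 - ω₈ ^ 7 = 2 * √2 * I := by
  rw [show ω₈ ^ 3 = ω₈ ^ 2 * ω₈ by ring, show ω₈ ^ 5 = (ω₈ ^ 2) ^ 2 * ω₈ by ring,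
    show ω₈ ^ 7 = (ω₈ ^ 2) ^ 3 * ω₈ by ring, exp_two_pi_I_div_eight_sq, I_pow_three, I_sq,
    exp_two_pi_I_div_eight]
  linear_combination (√2 : ℂ) * I_sq

theorem sum_filter_odd_χ₈_pow_mul_exp {α m k : ℕ} (hm : m % 8 = 1) (hk : 2 ≤ k) :
    ∑ d ∈ (Ioc (0 : ℕ) (2 ^ k)).filter Odd,
        ((χ₈ (d : ZMod 8) : ℤ) : ℂ) ^ k * exp (2 * π * I * (4 ^ α * m : ℕ) * d / (2 ^ k : ℕ))
      = if Even k ∧ k ≤ 2 * α then (2 : ℂ) ^ (k - 1)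
        else if k = 2 * α + 3 then 2 * (√2 : ℂ) * (4 : ℂ) ^ α else 0 := by
  have hf : Periodic (fun d : ℕ => ((χ₈ (d : ZMod 8) : ℤ) : ℂ) ^ k) 8 :=
    ZMod.periodic_natCast_comp fun x => ((χ₈ x : ℤ) : ℂ) ^ k
  have hf0 (d : ℕ) (hd : Even d) : ((χ₈ (d : ZMod 8) : ℤ) : ℂ) ^ k = 0 := by
    rw [χ₈.natCast_eq_zero_of_even (by decide) hd, Int.cast_zero, zero_pow (by omega)]
  obtain rfl | hk3 := hk.eq_or_lt
  · rw [sum_filter_odd_mul_exp_four, pow_four_pow_mul I_pow_four (by omega),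
      pow_four_pow_mul (by rw [neg_pow, I_pow_four]; norm_num) (by omega)]
    rcases α with _ | α <;> norm_num
  obtain hlt | hle := lt_or_ge (2 * α + 3) k
  · rw [sum_filter_odd_mul_exp_two_pow_of_lt hf hf0 hm hlt, if_neg (by omega), if_neg (by omega)]
  rw [sum_filter_odd_mul_exp_two_pow_of_le hf hf0 hm hk3 hle,
    sum_range_eight_χ₈_pow_mul_pow (by omega)]
  generalize he : 2 * α + 3 - k = e
  rcases e with _ | _ | _ | j
  · have hk' : k = 2 * α + 3 := by omega
    have h4 : (4 : ℂ) ^ α = 2 ^ (2 * α) := by rw [pow_mul]; norm_num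
    rw [if_neg fun ⟨_, h⟩ => by omega, if_pos hk', (show Odd k from ⟨α + 1, by omega⟩).neg_one_pow,
      pow_zero, pow_one, show k - 3 = 2 * α by omega, h4]
    linear_combination (2 : ℂ) ^ (2 * α) * gaussSum_χ₈_eq
  · obtain rfl : k = 2 * α + 2 := by omega
    simp [parity_simps, exp_two_pi_I_div_eight_sq]
  · obtain rfl : k = 2 * α + 1 := by omega
    norm_num [parity_simps, exp_two_pi_I_div_eight_pow_four]
  · rw [exp_two_pi_I_div_eight_pow_two_pow_add_three]
    rcases Nat.even_or_odd k with hke | hko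
    · rw [if_pos ⟨hke, by omega⟩, hke.neg_one_pow, show k - 1 = k - 3 + 2 by omega, pow_add]
      norm_num
    · simp [hko, show k ≠ 2 * α + 3 by omega]

theorem sum_filter_odd_χ₄_mul_χ₈_pow_mul_exp {α m k : ℕ} (hm : m % 8 = 1) (hk : 2 ≤ k) :
    ∑ d ∈ (Ioc (0 : ℕ) (2 ^ k)).filter Odd,
        ((χ₄ (d : ZMod 4) : ℤ) : ℂ) * ((χ₈ (d : ZMod 8) : ℤ) : ℂ) ^ k *
          exp (2 * π * I * (4 ^ α * m : ℕ) * d / (2 ^ k : ℕ))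
      = if k = 2 * α + 2 then 2 * I * (4 : ℂ) ^ α
        else if k = 2 * α + 3 then 2 * (√2 : ℂ) * I * (4 : ℂ) ^ α else 0 := by
  have hχ₄ : Periodic (fun d : ℕ => ((χ₄ (d : ZMod 4) : ℤ) : ℂ)) 8 := by
    simpa using (ZMod.periodic_natCast_comp fun x : ZMod 4 => ((χ₄ x : ℤ) : ℂ)).nat_mul 2
  have hf : Periodic (fun d : ℕ => ((χ₄ (d : ZMod 4) : ℤ) : ℂ) * ((χ₈ (d : ZMod 8) : ℤ) : ℂ) ^ k)
      8 := hχ₄.mul (ZMod.periodic_natCast_comp fun x => ((χ₈ x : ℤ) : ℂ) ^ k)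
  have hf0 (d : ℕ) (hd : Even d) :
      ((χ₄ (d : ZMod 4) : ℤ) : ℂ) * ((χ₈ (d : ZMod 8) : ℤ) : ℂ) ^ k = 0 := by
    rw [χ₄.natCast_eq_zero_of_even (by decide) hd, Int.cast_zero, zero_mul]
  obtain rfl | hk3 := hk.eq_or_lt
  · rw [sum_filter_odd_mul_exp_four, pow_four_pow_mul I_pow_four (by omega),
      pow_four_pow_mul (by rw [neg_pow, I_pow_four]; norm_num) (by omega)]
    rcases α with _ | α
    · norm_num [two_mul]
    · norm_num
  obtain hlt | hle := lt_or_ge (2 * α + 3) k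
  · rw [sum_filter_odd_mul_exp_two_pow_of_lt hf hf0 hm hlt, if_neg (by omega), if_neg (by omega)]
  rw [sum_filter_odd_mul_exp_two_pow_of_le hf hf0 hm hk3 hle,
    sum_range_eight_χ₄_mul_χ₈_pow_mul_pow]
  generalize he : 2 * α + 3 - k = e
  have h4 : (4 : ℂ) ^ α = 2 ^ (2 * α) := by rw [pow_mul]; norm_num
  rcases e with _ | _ | _ | j
  · have hk' : k = 2 * α + 3 := by omega
    rw [if_neg (by omega), if_pos hk', (show Odd k from ⟨α + 1, by omega⟩).neg_one_pow,
      pow_zero, pow_one, show k - 3 = 2 * α by omega, h4]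
    linear_combination (2 : ℂ) ^ (2 * α) * gaussSum_χ₈'_eq
  · have hk' : k = 2 * α + 2 := by omega
    rw [if_pos hk', (show Even k from ⟨α + 1, by omega⟩).neg_one_pow, zero_add, pow_one,
      exp_two_pi_I_div_eight_sq, h4, show 2 * α = k - 3 + 1 by omega, pow_succ]
    -- `I - I ^ 3 + I ^ 5 - I ^ 7 = 4 * I`
    linear_combination -(2 : ℂ) ^ (k - 3) * I * (I ^ 4 - 2 * I ^ 2 + 3) * I_sq
  · obtain rfl : k = 2 * α + 1 := by omega
    norm_num [parity_simps, exp_two_pi_I_div_eight_pow_four]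
  · rw [exp_two_pi_I_div_eight_pow_two_pow_add_three]
    simp [show k ≠ 2 * α + 2 by omega, show k ≠ 2 * α + 3 by omega]

theorem gauss_sum_two_power_general
    (α m : ℕ) (hm8 : m % 8 = 1)
    (n : ℕ) (hn : n = 4 ^ α * m)
    (k : ℕ) (hk : 2 ≤ k)
    (A B : ℂ)
    (hA : A = ∑ d ∈ (Finset.Ioc (0 : ℕ) (2 ^ k)).filter (fun d => Odd d),
      (((ZMod.χ₈ ((d : ℕ) : ZMod 8) : ℤ) : ℂ)) ^ k *
        Complex.exp (2 * (Real.pi : ℂ) * Complex.I * (n : ℂ) * (d : ℂ) /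
          ((2 ^ k : ℕ) : ℂ)))
    (hB : B = ∑ d ∈ (Finset.Ioc (0 : ℕ) (2 ^ k)).filter (fun d => Odd d),
      ((ZMod.χ₄ ((d : ℕ) : ZMod 4) : ℤ) : ℂ) *
        (((ZMod.χ₈ ((d : ℕ) : ZMod 8) : ℤ) : ℂ)) ^ k *
        Complex.exp (2 * (Real.pi : ℂ) * Complex.I * (n : ℂ) * (d : ℂ) /
          ((2 ^ k : ℕ) : ℂ))) :
    (Even k ∧ k ≤ 2 * α → A = (2 : ℂ) ^ (k - 1)) ∧
    (k = 2 * α + 3 → A = 2 * (Real.sqrt 2 : ℂ) * (4 : ℂ) ^ α) ∧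
    (¬(Even k ∧ k ≤ 2 * α) ∧ k ≠ 2 * α + 3 → A = 0) ∧
    (k = 2 * α + 2 → B = 2 * Complex.I * (4 : ℂ) ^ α) ∧
    (k = 2 * α + 3 → B = 2 * (Real.sqrt 2 : ℂ) * Complex.I * (4 : ℂ) ^ α) ∧
    (k ≠ 2 * α + 2 ∧ k ≠ 2 * α + 3 → B = 0) := by
  subst hn hA hB
  rw [sum_filter_odd_χ₈_pow_mul_exp hm8 hk, sum_filter_odd_χ₄_mul_χ₈_pow_mul_exp hm8 hk]
  refine ⟨fun h => if_pos h, fun h => ?_, fun h => ?_, fun h => if_pos h, fun h => ?_, fun h => ?_⟩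
  · rw [if_neg fun ⟨_, hle⟩ => by omega, if_pos h]
  · rw [if_neg h.1, if_neg h.2]
  · rw [if_neg (by omega), if_pos h]
  · rw [if_neg h.1, if_neg h.2]

/-- Gauss sum evaluations (eqn:G8) and (eqn:G-8): for `n = 4^α·m` with
`m ≡ 1 (mod 8)` and `k ≥ 2`, the sums `A_k = ∑ χ₈(d)^k e(nd/2^k)` and
`B_k = ∑ χ₋₄(d) χ₈(d)^k e(nd/2^k)` over odd `1 ≤ d ≤ 2^k` take the stated
values. -/
theorem gauss_sum_two_power
    (α m : ℕ) (hm : 1 ≤ m) (hm8 : m % 8 = 1)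
    (n : ℕ) (hn : n = 4 ^ α * m)
    (k : ℕ) (hk : 2 ≤ k)
    (A B : ℂ)
    (hA : A = ∑ d ∈ (Finset.Ioc (0 : ℕ) (2 ^ k)).filter (fun d => Odd d),
      (((ZMod.χ₈ ((d : ℕ) : ZMod 8) : ℤ) : ℂ)) ^ k *
        Complex.exp (2 * (Real.pi : ℂ) * Complex.I * (n : ℂ) * (d : ℂ) /
          ((2 ^ k : ℕ) : ℂ)))
    (hB : B = ∑ d ∈ (Finset.Ioc (0 : ℕ) (2 ^ k)).filter (fun d => Odd d),
      ((ZMod.χ₄ ((d : ℕ) : ZMod 4) : ℤ) : ℂ) *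
        (((ZMod.χ₈ ((d : ℕ) : ZMod 8) : ℤ) : ℂ)) ^ k *
        Complex.exp (2 * (Real.pi : ℂ) * Complex.I * (n : ℂ) * (d : ℂ) /
          ((2 ^ k : ℕ) : ℂ))) :
    (Even k ∧ k ≤ 2 * α → A = (2 : ℂ) ^ (k - 1)) ∧
    (k = 2 * α + 3 → A = 2 * (Real.sqrt 2 : ℂ) * (4 : ℂ) ^ α) ∧
    (¬(Even k ∧ k ≤ 2 * α) ∧ k ≠ 2 * α + 3 → A = 0) ∧
    (k = 2 * α + 2 → B = 2 * Complex.I * (4 : ℂ) ^ α) ∧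
    (k = 2 * α + 3 → B = 2 * (Real.sqrt 2 : ℂ) * Complex.I * (4 : ℂ) ^ α) ∧
    (k ≠ 2 * α + 2 ∧ k ≠ 2 * α + 3 → B = 0) :=
  gauss_sum_two_power_general α m hm8 n hn k hk A B hA hB
end
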